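/- If G is an induced subgraph of H via an injection φ: V(G) → V(H), and B is a zero forcing set of G, then B' = V(H) \ φ(V(G)\B) is a zero forcing set of H with pt(H;B') ≤ pt(G;B). -/
import Mathlib


open SimpleGraph Set Function

namespace ThrotPaper

variable {V : Type*} {W : Type*} {α : Type*}

/-- One simultaneous round of standard zero forcing: a blue vertex forces its
unique white neighbor. -/
def zfStep (G : SimpleGraph V) (B : Set V) : Set V :=
  B ∪ {w | w ∉ B ∧ ∃ u ∈ B, G.Adj u w ∧ ∀ x, G.Adj u x → x ∉ B → x = w}

/-- `B` is a standard zero forcing set of `G`. -/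
def IsZFSet (G : SimpleGraph V) (B : Set V) : Prop :=
  ∃ t, (zfStep G)^[t] B = Set.univ

/-- Standard propagation time of `B` in `G`. -/
noncomputable def zfPt (G : SimpleGraph V) (B : Set V) : ℕ :=
  sInf {t | (zfStep G)^[t] B = Set.univ}

/-- Standard throttling number of `G`. -/
noncomputable def zfTh (G : SimpleGraph V) : ℕ :=
  sInf {n | ∃ B : Set V, IsZFSet G B ∧ n = B.ncard + zfPt G B}

/-- The set `B^(i)` of vertices newly forced at time step `i ≥ 1`. -/
def newBlue (G : SimpleGraph V) (B : Set V) (i : ℕ) : Set V :=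
  (zfStep G)^[i] B \ (zfStep G)^[i - 1] B

/-- `G` contains an induced copy of `X`. -/
def HasInducedCopy (X : SimpleGraph α) (G : SimpleGraph V) : Prop :=
  ∃ f : α ↪ V, ∀ a b, X.Adj a b ↔ G.Adj (f a) (f b)

/-- The path on four vertices. -/
def P4 : SimpleGraph (Fin 4) := SimpleGraph.fromRel (fun i j => (i : ℕ) + 1 = (j : ℕ))

/-- The cycle on four vertices. -/
def C4 : SimpleGraph (Fin 4) := SimpleGraph.fromRel (fun i j => j = i + 1)

/-- The bowtie: two triangles sharing the vertex `0`. -/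
def Bowtie : SimpleGraph (Fin 5) :=
  SimpleGraph.fromRel
    (fun i j => ({i, j} : Set (Fin 5)) ⊆ {0, 1, 2} ∨ ({i, j} : Set (Fin 5)) ⊆ {0, 3, 4})

/-- The disjoint union of two edges. -/
def TwoK2 : SimpleGraph (Fin 4) :=
  SimpleGraph.fromRel (fun i j => (i = 0 ∧ j = 1) ∨ (i = 2 ∧ j = 3))

/-- `x` and `y` are white and lie in the same component of `G - B`. -/
def whiteConn (G : SimpleGraph V) (B : Set V) (x y : V) : Prop :=
  ∃ (hx : x ∈ Bᶜ) (hy : y ∈ Bᶜ), (G.induce Bᶜ).Reachable ⟨x, hx⟩ ⟨y, hy⟩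

/-- One simultaneous round of positive semidefinite zero forcing. -/
def psdStep (G : SimpleGraph V) (B : Set V) : Set V :=
  B ∪ {w | w ∉ B ∧ ∃ u ∈ B, G.Adj u w ∧
    ∀ x, G.Adj u x → x ∉ B → whiteConn G B x w → x = w}

/-- `B` is a PSD zero forcing set of `G`. -/
def IsPSDSet (G : SimpleGraph V) (B : Set V) : Prop :=
  ∃ t, (psdStep G)^[t] B = Set.univ

/-- PSD propagation time. -/
noncomputable def psdPt (G : SimpleGraph V) (B : Set V) : ℕ :=
  sInf {t | (psdStep G)^[t] B = Set.univ}

/-- PSD throttling number. -/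
noncomputable def psdTh (G : SimpleGraph V) : ℕ :=
  sInf {n | ∃ B : Set V, IsPSDSet G B ∧ n = B.ncard + psdPt G B}

/-- The blue set at time `t` when performing exactly the PSD forces in `F`,
as early as possible. -/
def psdBlueAt (G : SimpleGraph V) (F : Set (V × V)) (B : Set V) : ℕ → Set V
  | 0 => B
  | t + 1 =>
    psdBlueAt G F B t ∪ {w | w ∉ psdBlueAt G F B t ∧ ∃ u ∈ psdBlueAt G F B t,
      (u, w) ∈ F ∧ G.Adj u w ∧
      ∀ x, G.Adj u x → x ∉ psdBlueAt G F B t →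
        whiteConn G (psdBlueAt G F B t) x w → x = w}

/-- PSD propagation time of a set of forces `F`. -/
noncomputable def psdPtF (G : SimpleGraph V) (F : Set (V × V)) (B : Set V) : ℕ :=
  sInf {t | psdBlueAt G F B t = Set.univ}

/-- `F` is a set of PSD forces of `B` in `G` (every vertex outside `B` has a
unique forcer and the forces color the whole graph). -/
def IsPSDForceSet (G : SimpleGraph V) (F : Set (V × V)) (B : Set V) : Prop :=
  (∀ w ∉ B, ∃! u, (u, w) ∈ F) ∧ (∀ p ∈ F, p.2 ∉ B ∧ p.1 ≠ p.2) ∧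
    ∃ t, psdBlueAt G F B t = Set.univ

/-- `G'` is obtained from `G` by contracting the edge `uv`, via the
identification map `φ`. -/
def IsEdgeContraction (G : SimpleGraph V) (u v : V) (G' : SimpleGraph W) (φ : V → W) : Prop :=
  Function.Surjective φ ∧ φ u = φ v ∧
    (∀ x y : V, φ x = φ y → x ≠ y → (x = u ∧ y = v) ∨ (x = v ∧ y = u)) ∧
    (∀ a b : W, G'.Adj a b ↔ a ≠ b ∧ ∃ x y, G.Adj x y ∧ φ x = a ∧ φ y = b)

/-- One round of `⌊Z₊⌋` forcing (PSD forcing with hopping); a state consists of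
the blue set together with, for each vertex, the set of white vertices of
components with respect to which it is inactive. -/
def zpfRound (G : SimpleGraph V) (s s' : Set V × (V → Set V)) : Prop :=
  ∃ F : Set (V × V),
    (∀ p ∈ F, p.1 ∈ s.1 ∧ p.2 ∉ s.1 ∧ p.2 ∉ s.2 p.1 ∧
      ∀ x, G.Adj p.1 x → x ∉ s.1 → whiteConn G s.1 x p.2 → x = p.2) ∧
    (∀ p ∈ F, ∀ q ∈ F, p.2 = q.2 → p = q) ∧
    (∀ p ∈ F, ∀ q ∈ F, p.1 = q.1 → whiteConn G s.1 p.2 q.2 → p = q) ∧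
    s'.1 = s.1 ∪ {w | ∃ u, (u, w) ∈ F} ∧
    s'.2 = fun u => s.2 u ∪ {x | ∃ w, (u, w) ∈ F ∧ whiteConn G s.1 x w}

/-- From state `s` every vertex can be colored blue in `t` rounds of `⌊Z₊⌋` forcing. -/
def zpfReach (G : SimpleGraph V) : ℕ → Set V × (V → Set V) → Prop
  | 0, s => s.1 = Set.univ
  | t + 1, s => ∃ s', zpfRound G s s' ∧ zpfReach G t s'

/-- Throttling number for the minor monotone floor of PSD zero forcing. -/
noncomputable def zpfTh (G : SimpleGraph V) : ℕ :=
  sInf {n | ∃ (B : Set V) (t : ℕ), zpfReach G t (B, fun _ => ∅) ∧ n = B.ncard + t}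

/-- `G` is an `a`-accelerator. -/
def IsAccelerator (G : SimpleGraph V) (a : ℕ) : Prop :=
  ∃ S T : Set V, S ∩ T = ∅ ∧ S ∪ T = Set.univ ∧ S.ncard = a + 1 ∧ T.ncard = a + 1 ∧
    ∃ f : V → V, Set.BijOn f S T ∧ ∀ s ∈ S, ∀ t ∈ T, (G.Adj s t ↔ f s = t)

/-- The sets `S i`, `T i` witness that `G` is an `(a 0, …, a (r-1))`-accelerator graph. -/
def MultiAccelWitness (G : SimpleGraph V) {r : ℕ} (a : Fin r → ℕ)
    (S T : Fin r → Set V) : Prop :=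
  (⋃ i, S i ∪ T i) = Set.univ ∧
  (∀ i, (S i).ncard = a i + 1) ∧ (∀ i, (T i).ncard = a i + 1) ∧
  (∀ i j, i ≠ j → S i ∩ S j = ∅) ∧
  (∀ i j, i ≠ j → T i ∩ T j = ∅) ∧
  (∀ i j : Fin r, (i : ℕ) + 1 ≠ (j : ℕ) → T i ∩ S j = ∅) ∧
  (∀ i, ∃ f : V → V, Set.BijOn f (S i) (T i) ∧
    ∀ s ∈ S i, ∀ t ∈ T i, (G.Adj s t ↔ f s = t)) ∧
  (∀ u v, G.Adj u v →
    (∃ i, (u ∈ S i ∧ v ∈ T i) ∨ (v ∈ S i ∧ u ∈ T i) ∨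
      (u ∈ S i ∧ v ∈ S i) ∨ (u ∈ T i ∧ v ∈ T i)) ∨
    (∃ i j : Fin r, j < i ∧
      ((u ∈ S i ∧ (∀ p : Fin r, (p : ℕ) + 1 = (i : ℕ) → u ∉ T p) ∧ v ∈ S j ∪ T j) ∨
       (v ∈ S i ∧ (∀ p : Fin r, (p : ℕ) + 1 = (i : ℕ) → v ∉ T p) ∧ u ∈ S j ∪ T j)))) ∧
  (∀ i j : Fin r, (i : ℕ) + 1 = (j : ℕ) → ∀ s ∈ S j, ∃ t ∈ T i, G.Adj s t)

/-- `X` belongs to the family `𝒢ₖ`: it is an `(a₁,…,a_r)`-accelerator graph for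
some composition `a₁ + ⋯ + a_r = k + 1`. -/
def InAccelFamily (k : ℕ) (X : SimpleGraph α) : Prop :=
  ∃ (r : ℕ) (a : Fin r → ℕ) (S T : Fin r → Set α),
    1 ≤ r ∧ (∀ i, 1 ≤ a i) ∧ (∑ i, a i) = k + 1 ∧ MultiAccelWitness X a S T

/-- `G` is a minor of `H` (branch set definition). -/
def IsMinor (G : SimpleGraph V) (H : SimpleGraph W) : Prop :=
  ∃ f : V → Set W, (∀ v, (f v).Nonempty) ∧ (Pairwise fun u v => Disjoint (f u) (f v)) ∧
    (∀ v, (H.induce (f v)).Connected) ∧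
    ∀ u v, G.Adj u v → ∃ x ∈ f u, ∃ y ∈ f v, H.Adj x y

/-- The complete `k`-ary tree of height `b`, with vertices the lists over
`Fin k` of length at most `b` (children are obtained by prepending a letter). -/
def kAryTree (k b : ℕ) : SimpleGraph {l : List (Fin k) // l.length ≤ b} :=
  SimpleGraph.fromRel
    (fun x y => ∃ a : Fin k, (x : List (Fin k)) = a :: (y : List (Fin k)))

/-- `G` is obtained from `K_a □ T_{k,b}` by contracting tree edges and/or
deleting complete edges, via the quotient map `φ`. -/
def ObtainedByCTDC {a k b : ℕ} (G : SimpleGraph V)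
    (φ : Fin a × {l : List (Fin k) // l.length ≤ b} → V) : Prop :=
  Function.Surjective φ ∧
  (∀ p q, φ p = φ q → p.1 = q.1 ∧
    Relation.ReflTransGen
      (fun x y => φ x = φ y ∧ x.1 = y.1 ∧ (kAryTree k b).Adj x.2 y.2) p q) ∧
  (∀ p q, p.1 = q.1 → (kAryTree k b).Adj p.2 q.2 → φ p ≠ φ q → G.Adj (φ p) (φ q)) ∧
  (∀ u v, G.Adj u v → ∃ p q, φ p = u ∧ φ q = v ∧
    ((p.1 = q.1 ∧ (kAryTree k b).Adj p.2 q.2) ∨ (p.2 = q.2 ∧ p.1 ≠ q.1)))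


lemma zfStep_mono (G : SimpleGraph V) {B B' : Set V} (h : B ⊆ B') :
    zfStep G B ⊆ zfStep G B' := by
  intro w hw
  rcases hw with hw | ⟨hwB, u, huB, hadj, huniq⟩
  · exact Or.inl (h hw)
  by_cases hw' : w ∈ B'
  · exact Or.inl hw'
  · exact Or.inr ⟨hw', u, h huB, hadj, fun x hx hxB' => huniq x hx (fun hxB => hxB' (h hxB))⟩

lemma zfStep_embed {V W : Type*} (G : SimpleGraph V) (H : SimpleGraph W) (φ : V ↪ W)
    (hφ : ∀ a b, G.Adj a b ↔ H.Adj (φ a) (φ b)) (C : Set V) :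
    (φ '' (zfStep G C)ᶜ)ᶜ ⊆ zfStep H ((φ '' Cᶜ)ᶜ) := by
  intro w hw
  by_cases hwD : w ∈ (φ '' Cᶜ)ᶜ
  · exact Or.inl hwD
  · simp only [mem_compl_iff, not_not] at hwD
    obtain ⟨v, hvC, rfl⟩ := hwD
    have hv : v ∈ zfStep G C := by
      by_contra hv
      exact hw ⟨v, hv, rfl⟩
    rcases hv with hv | ⟨-, u, huC, hadj, huniq⟩
    · exact absurd hv hvC
    refine Or.inr ⟨?_, φ u, ?_, (hφ u v).1 hadj, ?_⟩
    · simp only [mem_compl_iff, not_not]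
      exact ⟨v, hvC, rfl⟩
    · intro h
      obtain ⟨u', hu', he⟩ := h
      exact hu' (φ.injective he ▸ huC)
    · intro x hx hxD
      simp only [mem_compl_iff, not_not] at hxD
      obtain ⟨y, hy, rfl⟩ := hxD
      have : G.Adj u y := (hφ u y).2 hx
      exact congrArg φ (huniq y this hy)

lemma zfIter_embed {V W : Type*} (G : SimpleGraph V) (H : SimpleGraph W) (φ : V ↪ W)
    (hφ : ∀ a b, G.Adj a b ↔ H.Adj (φ a) (φ b)) (B : Set V) (t : ℕ) :
    (φ '' ((zfStep G)^[t] B)ᶜ)ᶜ ⊆ (zfStep H)^[t] ((φ '' Bᶜ)ᶜ) := by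
  induction t with
  | zero => simp
  | succ t ih =>
    rw [Function.iterate_succ_apply', Function.iterate_succ_apply']
    exact (zfStep_embed G H φ hφ _).trans (zfStep_mono H ih)

/-- If `φ` embeds `G` in `H` as an induced subgraph and `B` is a
zero forcing set of `G`, then `B' = V(H) \ φ(V(G) \ B)` is a zero forcing set of
`H` with `pt(H;B') ≤ pt(G;B)`. -/
theorem stmt6 {V W : Type*} [Fintype V] [Fintype W]
    (G : SimpleGraph V) (H : SimpleGraph W) (φ : V ↪ W)
    (hφ : ∀ a b, G.Adj a b ↔ H.Adj (φ a) (φ b))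
    (B : Set V) (hB : IsZFSet G B) :
    IsZFSet H ((φ '' Bᶜ)ᶜ) ∧ zfPt H ((φ '' Bᶜ)ᶜ) ≤ zfPt G B := by
  have key : ∀ t, (zfStep G)^[t] B = Set.univ → (zfStep H)^[t] ((φ '' Bᶜ)ᶜ) = Set.univ := by
    intro t ht
    have := zfIter_embed G H φ hφ B t
    rw [ht] at this
    simp only [compl_univ, image_empty, compl_empty] at this
    exact eq_univ_of_univ_subset this
  obtain ⟨t, ht⟩ := hB
  constructor
  · exact ⟨t, key t ht⟩
  · have hmem : zfPt G B ∈ {t | (zfStep G)^[t] B = Set.univ} := Nat.sInf_mem ⟨t, ht⟩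
    exact Nat.sInf_le (key _ hmem)

end ThrotPaper
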